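/- Let G be a group and H ≤ G a self-normalized subgroup, i.e. N_G(H) = H. Then H is an Aut-splitting subgroup of G if and only if the following three conditions hold: (1) the center Z(G) (which is contained in Z(H) since N_G(H) = H) has finite index in the center Z(H); (2) there exists a finite-index subgroup A ≤ Aut(G) such that every α ∈ A maps H onto a conjugate of H; (3) the image of the composite homomorphism Aut_H(G) → Aut(H) → Out(H), sending α ∈ Aut_H(G) to the class in Out(H) of its restriction to H, is finite. -/

import Mathlib

section Defs

variable (G : Type*) [Group G]

/-- The subgroup of inner automorphisms of `G`. -/
def Inn : Subgroup (MulAut G) := (MulAut.conj : G →* MulAut G).range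

instance Inn.normal : (Inn G).Normal := by
  constructor
  intro n hn φ
  obtain ⟨g, rfl⟩ := hn
  refine ⟨φ g, ?_⟩
  ext x
  simp only [MulAut.conj_apply, MulAut.mul_apply, map_mul, map_inv, MulAut.inv_def,
    MulEquiv.apply_symm_apply]

/-- The outer automorphism group `Out(G) = Aut(G)/Inn(G)`. -/
def Out := MulAut G ⧸ Inn G

instance : Group (Out G) := inferInstanceAs (Group (MulAut G ⧸ Inn G))

/-- The canonical projection `Aut(G) → Out(G)`. -/
def outProj : MulAut G →* Out G := QuotientGroup.mk' (Inn G)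

/-- A surjective homomorphism `f : A → B` splits virtually if it admits a section on some
finite-index subgroup of `B`. -/
def SplitsVirtually {A B : Type*} [Group A] [Group B] (f : A →* B) : Prop :=
  ∃ B' : Subgroup B, B'.FiniteIndex ∧ ∃ s : (↥B') →* A, ∀ x : B', f (s x) = (x : B)

/-- A group is residually finite if every nontrivial element survives in some finite quotient. -/
def ResiduallyFinite (G : Type*) [Group G] : Prop :=
  ∀ g : G, g ≠ 1 → ∃ (F : Type) (_ : Group F) (_ : Finite F) (φ : G →* F), φ g ≠ 1

/-- A group is residually `p` if every nontrivial element survives in some finite `p`-group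
quotient. -/
def ResiduallyP (p : ℕ) (G : Type*) [Group G] : Prop :=
  ∀ g : G, g ≠ 1 →
    ∃ (F : Type) (_ : Group F) (_ : Finite F) (φ : G →* F), IsPGroup p F ∧ φ g ≠ 1

/-- A group is virtually residually `p` if some finite-index subgroup is residually `p`. -/
def VirtuallyResiduallyP (p : ℕ) (G : Type*) [Group G] : Prop :=
  ∃ K : Subgroup G, K.FiniteIndex ∧ ResiduallyP p ↥K

/-- `Aut_{H̲}(G)`: the subgroup of automorphisms of `G` fixing `H` pointwise. -/
def autFix (H : Subgroup G) : Subgroup (MulAut G) where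
  carrier := {φ | ∀ h ∈ H, φ h = h}
  one_mem' := fun _ _ => rfl
  mul_mem' := by
    intro a b ha hb h hh
    show a (b h) = h
    rw [hb h hh, ha h hh]
  inv_mem' := by
    intro a ha h hh
    show a⁻¹ h = h
    calc a⁻¹ h = a⁻¹ (a h) := by rw [ha h hh]
    _ = h := by rw [MulAut.inv_def]; exact a.symm_apply_apply h

/-- `Aut_H(G)`: the subgroup of automorphisms of `G` mapping `H` onto itself. -/
def autSetwise (H : Subgroup G) : Subgroup (MulAut G) where
  carrier := {φ | ∀ g : G, φ g ∈ H ↔ g ∈ H}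
  one_mem' := fun _ => Iff.rfl
  mul_mem' := by
    intro a b ha hb g
    show a (b g) ∈ H ↔ g ∈ H
    rw [ha, hb]
  inv_mem' := by
    intro a ha g
    show a⁻¹ g ∈ H ↔ g ∈ H
    have h1 : a (a⁻¹ g) = g := by rw [MulAut.inv_def]; exact a.apply_symm_apply g
    have := ha (a⁻¹ g)
    rw [h1] at this
    exact this.symm

theorem mem_autSetwise {H : Subgroup G} {φ : MulAut G} :
    φ ∈ autSetwise G H ↔ ∀ g : G, φ g ∈ H ↔ g ∈ H := Iff.rfl

/-- `H` is an Aut-splitting subgroup of `G` if the restriction of `Aut(G) → Out(G)` to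
`Aut_{H̲}(G)` has finite kernel and an image of finite index in `Out(G)`. -/
def IsAutSplitting (H : Subgroup G) : Prop :=
  Finite ((outProj G).comp (autFix G H).subtype).ker ∧
    ((autFix G H).map (outProj G)).FiniteIndex

/-- The conjugate `gKg⁻¹` of a subgroup. -/
def conjSubgroup (g : G) (K : Subgroup G) : Subgroup G :=
  K.map (MulAut.conj g).toMonoidHom

end Defs

section Restrict
variable (G : Type*) [Group G]

/-- Restriction of an automorphism preserving `H` to an automorphism of `H`. -/
def restrictEquiv (H : Subgroup G) (α : MulAut G) (hα : ∀ g : G, α g ∈ H ↔ g ∈ H) :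
    MulAut ↥H where
  toFun h := ⟨α (h : G), (hα (h : G)).2 h.2⟩
  invFun h := ⟨(α⁻¹ : MulAut G) (h : G), by
    have h1 : α ((α⁻¹ : MulAut G) h.1) = h.1 := by
      rw [MulAut.inv_def]; exact α.apply_symm_apply _
    exact (hα _).1 (h1.symm ▸ h.2)⟩
  left_inv h := by
    ext
    show (α⁻¹ : MulAut G) (α (h : G)) = (h : G)
    rw [MulAut.inv_def]; exact α.symm_apply_apply _
  right_inv h := by
    ext
    show α ((α⁻¹ : MulAut G) (h : G)) = (h : G)
    rw [MulAut.inv_def]; exact α.apply_symm_apply _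
  map_mul' h₁ h₂ := by ext; exact map_mul α (h₁ : G) (h₂ : G)

/-- The restriction homomorphism `Aut_H(G) → Aut(H)`, sending an automorphism of `G`
preserving `H` setwise to its restriction to `H`. -/
def autRestrictHom (H : Subgroup G) : ↥(autSetwise G H) →* MulAut ↥H where
  toFun α := restrictEquiv G H α.1 α.2
  map_one' := by ext x; rfl
  map_mul' a b := by ext x; rfl

end Restrict

/-!
Write `f : Aut(G) → Out(G)` and `U = f(Aut_{H̲}(G)) ≤ V = f(Aut_H(G))`. As `U ≤ V`, `U` has finite
index iff `V` has finite index and `[V : U]` is finite, and these are conditions (2) and (3):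
`f⁻¹(V)` consists exactly of the automorphisms sending `H` to a conjugate of `H`, and the kernel
of `Aut_H(G) → Out(H)` is the preimage of `U`, because an automorphism preserving `H` that acts
on `H` as conjugation by `g` forces `g ∈ N_G(H) = H`. Finally, the kernel of
`Aut_{H̲}(G) → Out(G)` is the image of `C_G(H)` under conjugation, i.e. `C_G(H)/Z(G)`, and
`C_G(H) ≤ N_G(H) = H` gives `C_G(H) = Z(H)`; this is condition (1).
-/

open Subgroup

theorem MonoidHom.finite_range_iff_index_ker_ne_zero {G G' : Type*} [Group G] [Group G']
    (f : G →* G') : Finite f.range ↔ f.ker.index ≠ 0 := by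
  rw [index_ker, Nat.card_ne_zero]
  exact ⟨fun h => ⟨inferInstance, h⟩, And.right⟩

namespace Subgroup

variable {G : Type*} [Group G]

theorem finiteIndex_iff_of_le {U V : Subgroup G} (h : U ≤ V) :
    U.FiniteIndex ↔ V.FiniteIndex ∧ U.relIndex V ≠ 0 := by
  simp only [finiteIndex_iff, ← relIndex_mul_index h, mul_ne_zero_iff, and_comm]

theorem finite_map_conj_iff (K : Subgroup G) :
    Finite (K.map (MulAut.conj : G →* MulAut G)) ↔ (center G).relIndex K ≠ 0 := by
  have hker : (MulAut.conj : G →* MulAut G).ker = center G := by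
    ext g
    simp only [MonoidHom.mem_ker, MulEquiv.ext_iff, MulAut.conj_apply, MulAut.one_apply,
      mem_center_iff]
    exact forall_congr' fun x => mul_inv_eq_iff_eq_mul.trans eq_comm
  rw [← K.range_subtype, MonoidHom.map_range, MonoidHom.finite_range_iff_index_ker_ne_zero,
    ← MonoidHom.comap_ker, hker, range_subtype]
  rfl

theorem map_subtype_center_eq_centralizer {H : Subgroup G}
    (hself : normalizer (H : Set G) = H) : (center H).map H.subtype = centralizer H := by
  ext g
  refine ⟨?_, fun hg => ⟨⟨g, hself ▸ centralizer_le_normalizer _ hg⟩, ?_, rfl⟩⟩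
  · rintro ⟨z, hz, rfl⟩ h hh
    exact congrArg Subtype.val (mem_center_iff.mp hz ⟨h, hh⟩)
  · exact mem_center_iff.mpr fun h => Subtype.ext (mem_centralizer_iff.mp hg h h.2)

end Subgroup

section AutSplitting

variable {G : Type*} [Group G] {H : Subgroup G}

theorem outProj_ker : (outProj G).ker = Inn G := QuotientGroup.ker_mk' _

theorem outProj_surjective : Function.Surjective (outProj G) := QuotientGroup.mk'_surjective _

theorem outProj_conj_mul (g : G) (β : MulAut G) :
    outProj G (MulAut.conj g * β) = outProj G β := by
  have hg : MulAut.conj g ∈ (outProj G).ker := by rw [outProj_ker]; exact ⟨g, rfl⟩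
  rw [map_mul, hg, one_mul]

theorem mem_comap_map_outProj_iff {K : Subgroup (MulAut G)} {α : MulAut G} :
    α ∈ (K.map (outProj G)).comap (outProj G) ↔ ∃ g : G, (MulAut.conj g)⁻¹ * α ∈ K := by
  refine ⟨?_, fun ⟨g, hg⟩ => ⟨_, hg, by rw [← outProj_conj_mul g, mul_inv_cancel_left]⟩⟩
  rintro ⟨β, hβ, hfβ⟩
  have hinn : α * β⁻¹ ∈ Inn G := by
    rw [← outProj_ker, MonoidHom.mem_ker, map_mul, map_inv, hfβ, mul_inv_cancel]
  obtain ⟨g, hg⟩ := hinn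
  exact ⟨g, by rwa [hg, mul_inv_rev, inv_inv, inv_mul_cancel_right]⟩

theorem conj_mem_autFix_iff {g : G} : MulAut.conj g ∈ autFix G H ↔ g ∈ centralizer H := by
  refine forall₂_congr fun h _ => ?_
  rw [MulAut.conj_apply, mul_inv_eq_iff_eq_mul, eq_comm]

theorem autFix_inf_inn : autFix G H ⊓ Inn G = (centralizer H).map MulAut.conj := by
  ext α
  constructor
  · rintro ⟨hα, g, rfl⟩
    exact ⟨g, conj_mem_autFix_iff.mp hα, rfl⟩
  · rintro ⟨g, hg, rfl⟩
    exact ⟨conj_mem_autFix_iff.mpr hg, g, rfl⟩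

theorem finite_ker_outProj_autFix_iff (hself : normalizer (H : Set G) = H) :
    Finite ((outProj G).comp (autFix G H).subtype).ker ↔
      ((center G).subgroupOf H).relIndex (center H) ≠ 0 := by
  rw [← MonoidHom.comap_ker, outProj_ker]
  change Finite ((Inn G).subgroupOf (autFix G H)) ↔ _
  rw [← inf_subgroupOf_right,
    (subgroupOfEquivOfLe inf_le_right).toEquiv.finite_iff, inf_comm, autFix_inf_inn,
    finite_map_conj_iff, subgroupOf, relIndex_comap, map_subtype_center_eq_centralizer hself]

theorem autFix_le_autSetwise : autFix G H ≤ autSetwise G H := by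
  intro β hβ g
  refine ⟨fun hg => ?_, fun hg => (hβ g hg).symm ▸ hg⟩
  have hfix : β⁻¹ (β g) = β g := inv_mem hβ (β g) hg
  rw [MulAut.inv_apply_self] at hfix
  rwa [hfix]

theorem inv_conj_mul_mem_autFix_iff {g : G} {α : MulAut G} :
    (MulAut.conj g)⁻¹ * α ∈ autFix G H ↔ ∀ x ∈ H, α x = g * x * g⁻¹ := by
  refine forall₂_congr fun x _ => ?_
  rw [MulAut.mul_apply, ← map_inv, MulAut.conj_apply, inv_inv, mul_assoc, inv_mul_eq_iff_eq_mul,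
    ← eq_mul_inv_iff_mul_eq]

theorem map_mul_toMonoidHom (a b : MulAut G) (K : Subgroup G) :
    K.map (a * b).toMonoidHom = (K.map b.toMonoidHom).map a.toMonoidHom := by
  rw [map_map]
  rfl

theorem map_inv_toMonoidHom_eq_iff {e : MulAut G} {K L : Subgroup G} :
    K.map e⁻¹.toMonoidHom = L ↔ K = L.map e.toMonoidHom := by
  constructor
  · rintro rfl
    rw [← map_mul_toMonoidHom, mul_inv_cancel]
    exact K.map_id.symm
  · rintro rfl
    rw [← map_mul_toMonoidHom, inv_mul_cancel]
    exact L.map_id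

theorem mem_autSetwise_iff_map_eq {α : MulAut G} :
    α ∈ autSetwise G H ↔ H.map α.toMonoidHom = H := by
  refine ⟨fun hα => le_antisymm ?_ fun g hg => ?_, fun h g => ?_⟩
  · rintro _ ⟨x, hx, rfl⟩
    exact (hα x).2 hx
  · exact ⟨α⁻¹ g, (hα _).1 (by rwa [MulAut.apply_inv_self]), MulAut.apply_inv_self G α g⟩
  · have := mem_map_iff_mem (f := α.toMonoidHom) α.injective (K := H) (x := g)
    rwa [h] at this

theorem inv_conj_mul_mem_autSetwise_iff {g : G} {α : MulAut G} :
    (MulAut.conj g)⁻¹ * α ∈ autSetwise G H ↔ H.map α.toMonoidHom = conjSubgroup G g H := by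
  rw [mem_autSetwise_iff_map_eq, map_mul_toMonoidHom, map_inv_toMonoidHom_eq_iff, conjSubgroup]

theorem outProj_autRestrictHom_eq_one_iff {a : autSetwise G H} :
    outProj H (autRestrictHom G H a) = 1 ↔ ∃ h ∈ H, ∀ x ∈ H, (a : MulAut G) x = h * x * h⁻¹ := by
  rw [← MonoidHom.mem_ker, outProj_ker]
  constructor
  · rintro ⟨h, hh⟩
    refine ⟨h, h.2, fun x hx => ?_⟩
    have hx' := DFunLike.congr_fun hh ⟨x, hx⟩
    exact (congrArg Subtype.val hx').symm
  · rintro ⟨h, hH, hh⟩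
    exact ⟨⟨h, hH⟩, MulEquiv.ext fun x => Subtype.ext (hh x x.2).symm⟩

theorem mem_of_mem_autSetwise_of_apply_eq_conj (hself : normalizer (H : Set G) = H)
    {α : MulAut G} (hα : α ∈ autSetwise G H) {g : G} (hg : ∀ x ∈ H, α x = g * x * g⁻¹) : g ∈ H := by
  rw [← hself, mem_normalizer_iff_map_conj_eq]
  refine Eq.trans ?_ (mem_autSetwise_iff_map_eq.mp hα)
  ext y
  simp only [mem_map]
  exact exists_congr fun x => and_congr_right fun hx => by
    rw [MulEquiv.coe_toMonoidHom, hg x hx]; rfl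

theorem ker_outProj_comp_autRestrictHom (hself : normalizer (H : Set G) = H) :
    ((outProj H).comp (autRestrictHom G H)).ker =
      ((autFix G H).map (outProj G)).comap ((outProj G).comp (autSetwise G H).subtype) := by
  ext a
  rw [MonoidHom.mem_ker, MonoidHom.comp_apply, outProj_autRestrictHom_eq_one_iff, ← comap_comap,
    mem_comap, subtype_apply, mem_comap_map_outProj_iff]
  simp only [inv_conj_mul_mem_autFix_iff]
  exact ⟨fun ⟨h, _, hh⟩ => ⟨h, hh⟩,
    fun ⟨g, hg⟩ => ⟨g, mem_of_mem_autSetwise_of_apply_eq_conj hself a.2 hg, hg⟩⟩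

theorem exists_finiteIndex_map_conj_iff :
    (∃ A : Subgroup (MulAut G), A.FiniteIndex ∧
        ∀ α ∈ A, ∃ g : G, H.map (MulEquiv.toMonoidHom α) = conjSubgroup G g H) ↔
      ((autSetwise G H).map (outProj G)).FiniteIndex := by
  have hcomap : ∀ α, α ∈ ((autSetwise G H).map (outProj G)).comap (outProj G) ↔
      ∃ g : G, H.map α.toMonoidHom = conjSubgroup G g H := fun α => by
    simp only [mem_comap_map_outProj_iff, inv_conj_mul_mem_autSetwise_iff]
  rw [finiteIndex_iff, ← index_comap_of_surjective _ outProj_surjective, ← finiteIndex_iff]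
  refine ⟨fun ⟨A, hA, hmap⟩ => finiteIndex_of_le fun α hα => (hcomap α).mpr (hmap α hα),
    fun h => ⟨_, h, fun α => (hcomap α).mp⟩⟩

theorem finite_range_outProj_comp_autRestrictHom_iff (hself : normalizer (H : Set G) = H) :
    Finite ((outProj H).comp (autRestrictHom G H)).range ↔
      ((autFix G H).map (outProj G)).relIndex ((autSetwise G H).map (outProj G)) ≠ 0 := by
  rw [MonoidHom.finite_range_iff_index_ker_ne_zero, ker_outProj_comp_autRestrictHom hself,
    index_comap, MonoidHom.range_comp, range_subtype]

end AutSplitting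

/-- For a self-normalized subgroup `H` of `G`: `H` is Aut-splitting iff
(1) `Z(G)` has finite index in `Z(H)`, (2) a finite-index subgroup of `Aut(G)` maps `H` onto
conjugates of `H`, and (3) the image of the composite `Aut_H(G) → Aut(H) → Out(H)` is finite. -/
theorem statement12 (G : Type*) [Group G] (H : Subgroup G) (hself : Subgroup.normalizer (H : Set G) = H) :
    IsAutSplitting G H ↔
      (((Subgroup.center G).subgroupOf H).relIndex (Subgroup.center ↥H) ≠ 0 ∧
      (∃ A : Subgroup (MulAut G), A.FiniteIndex ∧
        ∀ α ∈ A, ∃ g : G, H.map (MulEquiv.toMonoidHom α) = conjSubgroup G g H) ∧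
      Finite (((outProj ↥H).comp (autRestrictHom G H)).range)) := by
  rw [IsAutSplitting, finite_ker_outProj_autFix_iff hself, exists_finiteIndex_map_conj_iff,
    finite_range_outProj_comp_autRestrictHom_iff hself,
    finiteIndex_iff_of_le (map_mono autFix_le_autSetwise)]
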